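/- Let C > 0 and let (φ^K)_K be a family of real sequences in ℓ²(ℤ_{>0}) with ‖φ^K‖_{ℓ²} = 1 and φ^K(n) = 0 for all n ≤ n_r(K), such that sup_K [ Σ_{n ≥ n_r(K)} √(λ_n^K μ_{n+1}^K) (φ^K(n+1) − φ^K(n))² + Σ_{n ≥ n_r(K)} max(1, V_n(K)) φ^K(n)² ] ≤ C. Then there exist a constant C̃ > 0 and K₀ such that for every K ≥ K₀ and every real h with |h| ≤ 1, ∫_ℝ (Q_K φ^K(x + h) − Q_K φ^K(x))² dx ≤ C̃ |h|. -/

import Mathlib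

open Filter MeasureTheory
open scoped BigOperators Topology ENNReal Classical

noncomputable section

/-- The standing assumptions on the birth and death rate functions `b` and `d`. -/
structure BD where
  b : ℝ → ℝ
  d : ℝ → ℝ
  xs : ℝ
  xs_pos : 0 < xs
  b_zero : b 0 = 0
  d_zero : d 0 = 0
  b_nonneg : ∀ x : ℝ, 0 ≤ x → 0 ≤ b x
  d_nonneg : ∀ x : ℝ, 0 ≤ x → 0 ≤ d x
  bq_pos : ∀ x : ℝ, 0 < x → 0 < b x / x
  dq_pos : ∀ x : ℝ, 0 < x → 0 < d x / x
  bq_smooth : ContDiffOn ℝ 2 (fun x => b x / x) (Set.Ioi 0)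
  dq_smooth : ContDiffOn ℝ 2 (fun x => d x / x) (Set.Ioi 0)
  bq_mono : StrictMonoOn (fun x => b x / x) (Set.Ioi 0)
  dq_mono : StrictMonoOn (fun x => d x / x) (Set.Ioi 0)
  ratio_tendsto : Tendsto (fun x => b x / d x) atTop (nhds 0)
  b_diff : ∀ x : ℝ, 0 ≤ x → DifferentiableAt ℝ b x
  d_diff : ∀ x : ℝ, 0 ≤ x → DifferentiableAt ℝ d x
  deriv_d0_pos : 0 < deriv d 0
  deriv_b0_gt : deriv d 0 < deriv b 0
  fix : b xs = d xs
  fix_unique : ∀ x : ℝ, 0 < x → b x = d x → x = xs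
  stab : deriv b xs < deriv d xs
  int_inv_d : MeasureTheory.IntegrableOn (fun x => 1 / d x) (Set.Ici (xs / 2))
  sup_dlog : ∃ M : ℝ, ∀ x : ℝ, 0 < x → deriv d x / d x - 1 / x ≤ M
  logratio_mono : StrictMonoOn (fun x => Real.log (d x / b x)) (Set.Ioi 0)
  H_smooth : ContDiffOn ℝ 3 (fun x => ∫ s in xs..x, Real.log (d s / b s)) (Set.Ioi 0)
  H3_bound : ∃ M : ℝ, ∀ x : ℝ, 0 < x →
    (1 + x ^ 2) * |iteratedDeriv 3 (fun y => ∫ s in xs..y, Real.log (d s / b s)) x| ≤ M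
  logb_small : Tendsto (fun x => Real.log (b x) / x) atTop (nhds 0)
  logd_small : Tendsto (fun x => Real.log (d x) / x) atTop (nhds 0)

/-- Birth rates `λ_n^K = K b(n/K)`. -/
def BD.lam (S : BD) (K n : ℕ) : ℝ := K * S.b (n / K)

/-- Death rates `μ_n^K = K d(n/K)`. -/
def BD.mu (S : BD) (K n : ℕ) : ℝ := K * S.d (n / K)

/-- The potential `V_n(K)`. -/
def BD.Vpot (S : BD) (K n : ℕ) : ℝ :=
  S.lam K n + S.mu K n - Real.sqrt (S.lam K n * S.mu K (n + 1))
    - (if 1 < n then Real.sqrt (S.lam K (n - 1) * S.mu K n) else 0)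

/-- `n_r(K) = ⌊K x* - K^{2/3} log K⌋`. -/
def BD.nr (S : BD) (K : ℕ) : ℤ := ⌊(K : ℝ) * S.xs - (K : ℝ) ^ ((2 : ℝ) / 3) * Real.log K⌋

/-- The interval `I_n^K`. -/
def Iset (xs : ℝ) (K n : ℕ) : Set ℝ :=
  Set.Ico (((n : ℝ) - 1 / 2) / Real.sqrt K - xs * Real.sqrt K)
    (((n : ℝ) + 1 / 2) / Real.sqrt K - xs * Real.sqrt K)

/-- The function `e_n^K = K^{1/4} 1_{I_n^K}`. -/
def eFun (xs : ℝ) (K n : ℕ) (x : ℝ) : ℝ :=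
  (K : ℝ) ^ ((1 : ℝ) / 4) * Set.indicator (Iset xs K n) (fun _ => (1 : ℝ)) x

/-- `Q_K : ℓ² → L²`, `Q_K u = Σ_{n ≥ 1} u(n) e_n^K`. -/
def QK (xs : ℝ) (K : ℕ) (u : ℕ → ℂ) (x : ℝ) : ℂ :=
  ∑' n : ℕ, u (n + 1) * ((eFun xs K (n + 1) x : ℝ) : ℂ)

/-- `P_K : L² → ℓ²`, `(P_K f)(n) = ∫ f(x) e_n^K(x) dx`. -/
def PK (xs : ℝ) (K : ℕ) (f : ℝ → ℂ) (n : ℕ) : ℂ :=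
  ∫ x : ℝ, f x * ((eFun xs K n x : ℝ) : ℂ)

/-- Real-valued version of `Q_K`. -/
def QKr (xs : ℝ) (K : ℕ) (u : ℕ → ℝ) (x : ℝ) : ℝ :=
  ∑' n : ℕ, u (n + 1) * eFun xs K (n + 1) x


lemma shift_tsum_sq_le (A : ℤ → ℝ) (q : ℕ) :
    ∑' m : ℤ, ENNReal.ofReal ((A (m + (q : ℤ)) - A m) ^ 2) ≤
      ENNReal.ofReal ((q : ℝ) ^ 2) * ∑' m : ℤ, ENNReal.ofReal ((A (m + 1) - A m) ^ 2) := by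
  set D := ∑' m : ℤ, ENNReal.ofReal ((A (m + 1) - A m) ^ 2) with hD
  have hpt : ∀ m : ℤ, ENNReal.ofReal ((A (m + (q : ℤ)) - A m) ^ 2) ≤
      (q : ℝ≥0∞) * ∑ i ∈ Finset.range q, ENNReal.ofReal ((A (m + i + 1) - A (m + i)) ^ 2) := by
    intro m
    have htel : A (m + (q : ℤ)) - A m
        = ∑ i ∈ Finset.range q, (A (m + i + 1) - A (m + i)) := by
      induction q with
      | zero => simp
      | succ n ih =>
        rw [Finset.sum_range_succ, ← ih]
        push_cast
        ring_nf
    have hcs : (A (m + (q : ℤ)) - A m) ^ 2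
        ≤ (q : ℝ) * ∑ i ∈ Finset.range q, (A (m + i + 1) - A (m + i)) ^ 2 := by
      rw [htel]
      simpa using sq_sum_le_card_mul_sum_sq (s := Finset.range q)
        (f := fun i : ℕ => A (m + i + 1) - A (m + i))
    calc ENNReal.ofReal ((A (m + (q : ℤ)) - A m) ^ 2)
        ≤ ENNReal.ofReal ((q : ℝ) * ∑ i ∈ Finset.range q, (A (m + i + 1) - A (m + i)) ^ 2) :=
          ENNReal.ofReal_le_ofReal hcs
      _ = (q : ℝ≥0∞) * ∑ i ∈ Finset.range q, ENNReal.ofReal ((A (m + i + 1) - A (m + i)) ^ 2) := by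
          rw [ENNReal.ofReal_mul (by positivity), ENNReal.ofReal_natCast,
            ENNReal.ofReal_sum_of_nonneg (fun i _ => by positivity)]
  calc ∑' m : ℤ, ENNReal.ofReal ((A (m + (q : ℤ)) - A m) ^ 2)
      ≤ ∑' m : ℤ, (q : ℝ≥0∞) * ∑ i ∈ Finset.range q,
          ENNReal.ofReal ((A (m + i + 1) - A (m + i)) ^ 2) := ENNReal.tsum_le_tsum hpt
    _ = (q : ℝ≥0∞) * ∑' m : ℤ, ∑ i ∈ Finset.range q,
          ENNReal.ofReal ((A (m + i + 1) - A (m + i)) ^ 2) := ENNReal.tsum_mul_left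
    _ = (q : ℝ≥0∞) * ∑ i ∈ Finset.range q, ∑' m : ℤ,
          ENNReal.ofReal ((A (m + i + 1) - A (m + i)) ^ 2) := by
        rw [Summable.tsum_finsetSum (fun i _ => ENNReal.summable)]
    _ = (q : ℝ≥0∞) * ∑ i ∈ Finset.range q, D := by
        congr 1
        refine Finset.sum_congr rfl (fun i _ => ?_)
        exact (Equiv.tsum_eq (Equiv.addRight (i : ℤ))
          (fun m => ENNReal.ofReal ((A (m + 1) - A m) ^ 2)))
    _ = ENNReal.ofReal ((q : ℝ) ^ 2) * D := by
        rw [Finset.sum_const, Finset.card_range, nsmul_eq_mul, ← mul_assoc]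
        congr 1
        rw [← ENNReal.ofReal_natCast q, ← ENNReal.ofReal_mul (by positivity), sq]

lemma floor_diff_lintegral (A : ℤ → ℝ) {t : ℝ} (ht : 0 ≤ t) :
    ∫⁻ y : ℝ, ENNReal.ofReal ((A ⌊y + t⌋ - A ⌊y⌋) ^ 2) ≤
      ENNReal.ofReal (t + 4 * t ^ 2) * ∑' m : ℤ, ENNReal.ofReal ((A (m + 1) - A m) ^ 2) := by
  set D := ∑' m : ℤ, ENNReal.ofReal ((A (m + 1) - A m) ^ 2) with hD
  set p : ℕ := ⌊t⌋.toNat with hp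
  have hfl0 : (0 : ℤ) ≤ ⌊t⌋ := Int.floor_nonneg.mpr ht
  have hpc : ((p : ℤ) : ℝ) = ((⌊t⌋ : ℤ) : ℝ) := by
    rw [hp, Int.toNat_of_nonneg hfl0]
  have hple : (p : ℝ) ≤ t := by
    have := Int.floor_le t
    push_cast at hpc ⊢
    linarith
  set s : ℝ := t - p with hs
  have hs0 : 0 ≤ s := by rw [hs]; linarith
  have hs1 : s < 1 := by
    have := Int.lt_floor_add_one t
    rw [hs]
    push_cast at hpc
    linarith
  set g : ℝ → ℝ≥0∞ := fun y => ENNReal.ofReal ((A ⌊y + t⌋ - A ⌊y⌋) ^ 2) with hg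
  have hdecomp : ∫⁻ y, g y = ∑' m : ℤ, ∫⁻ y in Set.Ico (m : ℝ) (m + 1), g y := by
    rw [← setLIntegral_univ, ← iUnion_Ico_intCast (α := ℝ)]
    refine lintegral_iUnion (fun m => measurableSet_Ico) ?_ g
    intro m m' hne
    simp only [Function.onFun]
    rw [Set.Ico_disjoint_Ico]
    rcases hne.lt_or_gt with hlt | hlt
    · have : (m : ℝ) + 1 ≤ m' := by exact_mod_cast hlt
      exact le_trans (min_le_left _ _) (le_trans this (le_max_right _ _))
    · have : (m' : ℝ) + 1 ≤ m := by exact_mod_cast hlt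
      exact le_trans (min_le_right _ _) (le_trans this (le_max_left _ _))
  have hpiece : ∀ m : ℤ, ∫⁻ y in Set.Ico (m : ℝ) (m + 1), g y
      = ENNReal.ofReal ((A (m + (p : ℤ)) - A m) ^ 2) * ENNReal.ofReal (1 - s)
        + ENNReal.ofReal ((A (m + ((p + 1 : ℕ) : ℤ)) - A m) ^ 2) * ENNReal.ofReal s := by
    intro m
    have hsplit : Set.Ico (m : ℝ) (m + 1)
        = Set.Ico (m : ℝ) (m + (1 - s)) ∪ Set.Ico ((m : ℝ) + (1 - s)) (m + 1) :=
      (Set.Ico_union_Ico_eq_Ico (by linarith) (by linarith)).symm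
    rw [hsplit, lintegral_union measurableSet_Ico (Set.Ico_disjoint_Ico_same)]
    have h1 : ∫⁻ y in Set.Ico (m : ℝ) (m + (1 - s)), g y
        = ENNReal.ofReal ((A (m + (p : ℤ)) - A m) ^ 2) * ENNReal.ofReal (1 - s) := by
      rw [setLIntegral_congr_fun measurableSet_Ico
        (fun y hy => ?_), setLIntegral_const, Real.volume_Ico]
      · congr 1
        rw [(by ring : (m : ℝ) + (1 - s) - (m : ℝ) = 1 - s)]
      · obtain ⟨hy1, hy2⟩ := hy
        have hfy : ⌊y⌋ = m := by
          rw [Int.floor_eq_iff]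
          constructor
          · exact hy1
          · push_cast; linarith
        have hfyt : ⌊y + t⌋ = m + (p : ℤ) := by
          rw [Int.floor_eq_iff]
          push_cast
          constructor
          · linarith
          · linarith
        rw [hg]
        simp only
        rw [hfy, hfyt]
    have h2 : ∫⁻ y in Set.Ico ((m : ℝ) + (1 - s)) (m + 1), g y
        = ENNReal.ofReal ((A (m + ((p + 1 : ℕ) : ℤ)) - A m) ^ 2) * ENNReal.ofReal s := by
      rw [setLIntegral_congr_fun measurableSet_Ico
        (fun y hy => ?_), setLIntegral_const, Real.volume_Ico]
      · congr 1
        rw [(by ring : (m : ℝ) + 1 - ((m : ℝ) + (1 - s)) = s)]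
      · obtain ⟨hy1, hy2⟩ := hy
        have hfy : ⌊y⌋ = m := by
          rw [Int.floor_eq_iff]
          constructor
          · linarith
          · push_cast; linarith
        have hfyt : ⌊y + t⌋ = m + ((p + 1 : ℕ) : ℤ) := by
          rw [Int.floor_eq_iff]
          push_cast
          constructor
          · linarith
          · linarith
        rw [hg]
        simp only
        rw [hfy, hfyt]
    rw [h1, h2]
  have hkey2 := shift_tsum_sq_le A (p + 1)
  have hkey1 := shift_tsum_sq_le A p
  have hreal : (p : ℝ) ^ 2 * (1 - s) + ((p + 1 : ℕ) : ℝ) ^ 2 * s ≤ t + 4 * t ^ 2 := by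
    push_cast
    rcases Nat.eq_zero_or_pos p with h0 | h0
    · rw [h0] at hple hs
      simp only [h0, Nat.cast_zero] at *
      nlinarith [sq_nonneg t]
    · have h1 : (1 : ℝ) ≤ (p : ℝ) := by exact_mod_cast h0
      nlinarith [hple, hs0, hs1, h1, ht, sq_nonneg ((p : ℝ) - 1),
        mul_nonneg (by linarith : (0:ℝ) ≤ 1 - s) (by linarith : (0:ℝ) ≤ 2 * (p:ℝ) + 1),
        mul_nonneg (by linarith : (0:ℝ) ≤ t - p) (by linarith : (0:ℝ) ≤ t + p)]
  calc ∫⁻ y, g y = ∑' m : ℤ, (ENNReal.ofReal ((A (m + (p : ℤ)) - A m) ^ 2) * ENNReal.ofReal (1 - s)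
        + ENNReal.ofReal ((A (m + ((p + 1 : ℕ) : ℤ)) - A m) ^ 2) * ENNReal.ofReal s) := by
        rw [hdecomp]; exact tsum_congr hpiece
    _ = (∑' m : ℤ, ENNReal.ofReal ((A (m + (p : ℤ)) - A m) ^ 2)) * ENNReal.ofReal (1 - s)
        + (∑' m : ℤ, ENNReal.ofReal ((A (m + ((p + 1 : ℕ) : ℤ)) - A m) ^ 2)) * ENNReal.ofReal s := by
        rw [ENNReal.tsum_add, ENNReal.tsum_mul_right, ENNReal.tsum_mul_right]
    _ ≤ (ENNReal.ofReal ((p : ℝ) ^ 2) * D) * ENNReal.ofReal (1 - s)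
        + (ENNReal.ofReal (((p + 1 : ℕ) : ℝ) ^ 2) * D) * ENNReal.ofReal s :=
        add_le_add (mul_le_mul_left hkey1 _) (mul_le_mul_left hkey2 _)
    _ = ENNReal.ofReal ((p : ℝ) ^ 2 * (1 - s) + ((p + 1 : ℕ) : ℝ) ^ 2 * s) * D := by
        rw [mul_right_comm, mul_right_comm (ENNReal.ofReal (((p + 1 : ℕ) : ℝ) ^ 2)) D,
          ← ENNReal.ofReal_mul (sq_nonneg ((p:ℝ))), ← ENNReal.ofReal_mul (sq_nonneg (((p+1:ℕ):ℝ))),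
          ← add_mul, ← ENNReal.ofReal_add (mul_nonneg (sq_nonneg _) (by linarith))
            (mul_nonneg (sq_nonneg _) hs0)]
    _ ≤ ENNReal.ofReal (t + 4 * t ^ 2) * D :=
        mul_le_mul_left (ENNReal.ofReal_le_ofReal hreal) D

lemma lintegral_affine {g : ℝ → ℝ≥0∞} (hg : Measurable g) {r : ℝ} (hr : 0 < r) (β : ℝ) :
    ∫⁻ x : ℝ, g (r * x + β) = ENNReal.ofReal r⁻¹ * ∫⁻ y, g y := by
  have haff : Measurable fun x : ℝ => r * x + β := (measurable_id.const_mul r).add_const β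
  have hmap : Measure.map (fun x : ℝ => r * x + β) volume
      = ENNReal.ofReal r⁻¹ • (volume : Measure ℝ) := by
    rw [show (fun x : ℝ => r * x + β) = (fun y : ℝ => y + β) ∘ (fun x : ℝ => r * x) from rfl,
      ← Measure.map_map (measurable_add_const β) (measurable_const_mul r),
      Real.map_volume_mul_left hr.ne', Measure.map_smul,
      map_add_right_eq_self (volume : Measure ℝ) β, abs_inv, abs_of_pos hr]
  calc ∫⁻ x : ℝ, g (r * x + β)
      = ∫⁻ y, g y ∂(Measure.map (fun x : ℝ => r * x + β) volume) := (lintegral_map hg haff).symm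
    _ = ENNReal.ofReal r⁻¹ * ∫⁻ y, g y := by rw [hmap, lintegral_smul_measure, smul_eq_mul]

/-- Sequence on `ℤ` extending `u` by zero. -/
def Aseq (u : ℕ → ℝ) (m : ℤ) : ℝ := if 1 ≤ m then u m.toNat else 0

lemma mem_Iset_iff (xs : ℝ) {K : ℕ} (hK : 1 ≤ K) (n : ℕ) (x : ℝ) :
    x ∈ Iset xs K n ↔ ⌊Real.sqrt K * x + xs * K + 1 / 2⌋ = (n : ℤ) := by
  have hK0 : (0 : ℝ) < K := by exact_mod_cast Nat.lt_of_lt_of_le Nat.zero_lt_one hK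
  have hr : 0 < Real.sqrt K := Real.sqrt_pos.mpr hK0
  have hrr : Real.sqrt K * Real.sqrt K = K := Real.mul_self_sqrt hK0.le
  have hexp : (x + xs * Real.sqrt K) * Real.sqrt K = Real.sqrt K * x + xs * (K:ℝ) := by
    linear_combination xs * hrr
  have key1 : ((n : ℝ) - 1 / 2) / Real.sqrt K - xs * Real.sqrt K ≤ x
      ↔ (n : ℝ) ≤ Real.sqrt K * x + xs * K + 1 / 2 := by
    rw [sub_le_iff_le_add, div_le_iff₀ hr]
    constructor <;> intro hineq <;> linarith [hexp]
  have key2 : x < ((n : ℝ) + 1 / 2) / Real.sqrt K - xs * Real.sqrt K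
      ↔ Real.sqrt K * x + xs * K + 1 / 2 < (n : ℝ) + 1 := by
    rw [lt_sub_iff_add_lt, lt_div_iff₀ hr]
    constructor <;> intro hineq <;> linarith [hexp]
  rw [Iset, Set.mem_Ico]
  constructor
  · rintro ⟨h1, h2⟩
    rw [Int.floor_eq_iff]
    refine ⟨?_, ?_⟩
    · push_cast
      exact key1.mp h1
    · push_cast
      exact key2.mp h2
  · intro hfl
    rw [Int.floor_eq_iff] at hfl
    obtain ⟨h1, h2⟩ := hfl
    push_cast at h1 h2
    exact ⟨key1.mpr h1, key2.mpr h2⟩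

lemma QKr_eq (xs : ℝ) {K : ℕ} (hK : 1 ≤ K) (u : ℕ → ℝ) (x : ℝ) :
    QKr xs K u x = (K : ℝ) ^ ((1 : ℝ) / 4) * Aseq u ⌊Real.sqrt K * x + xs * K + 1 / 2⌋ := by
  set M := ⌊Real.sqrt K * x + xs * K + 1 / 2⌋ with hM
  rw [QKr]
  rcases le_or_gt 1 M with h1 | h1
  · rw [tsum_eq_single (M.toNat - 1) ?_]
    · have hn : (M.toNat - 1) + 1 = M.toNat := by omega
      rw [hn]
      have hmem : x ∈ Iset xs K M.toNat := by
        rw [mem_Iset_iff xs hK, Int.toNat_of_nonneg (by omega : (0:ℤ) ≤ M)]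
      rw [eFun, Set.indicator_of_mem hmem]
      rw [Aseq, if_pos h1]
      ring
    · intro n hn'
      have hx : x ∉ Iset xs K (n + 1) := by
        rw [mem_Iset_iff xs hK]
        intro hc
        rw [← hM] at hc
        apply hn'
        omega
      rw [eFun, Set.indicator_of_notMem hx, mul_zero, mul_zero]
  · have hA : Aseq u M = 0 := by rw [Aseq, if_neg (by omega)]
    rw [hA, mul_zero]
    convert tsum_zero with n
    have hx : x ∉ Iset xs K (n + 1) := by
      rw [mem_Iset_iff xs hK]
      intro hc
      rw [← hM] at hc
      omega
    rw [eFun, Set.indicator_of_notMem hx, mul_zero, mul_zero]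

lemma BD.b_pos' (S : BD) {u : ℝ} (hu : 0 < u) : 0 < S.b u := by
  have h := mul_pos (S.bq_pos u hu) hu
  rwa [div_mul_cancel₀ _ hu.ne'] at h

lemma BD.d_pos' (S : BD) {u : ℝ} (hu : 0 < u) : 0 < S.d u := by
  have h := mul_pos (S.dq_pos u hu) hu
  rwa [div_mul_cancel₀ _ hu.ne'] at h

lemma BD.b_mono' (S : BD) {u v : ℝ} (hu : 0 < u) (huv : u ≤ v) : S.b u ≤ S.b v := by
  have hv : 0 < v := lt_of_lt_of_le hu huv
  have h1 : S.b u / u ≤ S.b v / v :=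
    S.bq_mono.monotoneOn (Set.mem_Ioi.mpr hu) (Set.mem_Ioi.mpr hv) huv
  have h2 : 0 < S.b v / v := S.bq_pos v hv
  calc S.b u = S.b u / u * u := (div_mul_cancel₀ _ hu.ne').symm
    _ ≤ S.b v / v * v := mul_le_mul h1 huv hu.le h2.le
    _ = S.b v := div_mul_cancel₀ _ hv.ne'

lemma BD.d_mono' (S : BD) {u v : ℝ} (hu : 0 < u) (huv : u ≤ v) : S.d u ≤ S.d v := by
  have hv : 0 < v := lt_of_lt_of_le hu huv
  have h1 : S.d u / u ≤ S.d v / v :=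
    S.dq_mono.monotoneOn (Set.mem_Ioi.mpr hu) (Set.mem_Ioi.mpr hv) huv
  have h2 : 0 < S.d v / v := S.dq_pos v hv
  calc S.d u = S.d u / u * u := (div_mul_cancel₀ _ hu.ne').symm
    _ ≤ S.d v / v * v := mul_le_mul h1 huv hu.le h2.le
    _ = S.d v := div_mul_cancel₀ _ hv.ne'

set_option maxHeartbeats 1000000 in
/-- Equicontinuity estimate: `∫ (Q_K φ^K(x+h) - Q_K φ^K(x))² dx ≤ C̃ |h|`. -/
theorem statement16 (S : BD) (C : ℝ) (hC : 0 < C) (φ : ℕ → ℕ → ℝ)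
    (hsum : ∀ K : ℕ, 1 ≤ K → Summable (fun n : ℕ => (φ K (n + 1)) ^ 2))
    (hnorm : ∀ K : ℕ, 1 ≤ K → (∑' n : ℕ, (φ K (n + 1)) ^ 2) = 1)
    (hvanish : ∀ K : ℕ, 1 ≤ K → ∀ n : ℕ, (n : ℤ) ≤ S.nr K → φ K n = 0)
    (hsum1 : ∀ K : ℕ, 1 ≤ K → Summable (fun n : ℕ =>
      Real.sqrt (S.lam K (n + 1) * S.mu K (n + 2)) * (φ K (n + 2) - φ K (n + 1)) ^ 2))
    (hsum2 : ∀ K : ℕ, 1 ≤ K → Summable (fun n : ℕ =>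
      max 1 (S.Vpot K (n + 1)) * (φ K (n + 1)) ^ 2))
    (hbound : ∀ K : ℕ, 1 ≤ K →
      (∑' n : ℕ, Real.sqrt (S.lam K (n + 1) * S.mu K (n + 2)) * (φ K (n + 2) - φ K (n + 1)) ^ 2)
        + (∑' n : ℕ, max 1 (S.Vpot K (n + 1)) * (φ K (n + 1)) ^ 2) ≤ C) :
    ∃ Ct : ℝ, 0 < Ct ∧ ∃ K₀ : ℕ, ∀ K : ℕ, K₀ ≤ K → ∀ h : ℝ, |h| ≤ 1 →
      (∫ x : ℝ, (QKr S.xs K (φ K) (x + h) - QKr S.xs K (φ K) x) ^ 2) ≤ Ct * |h| := by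
  have hxs0 : 0 < S.xs := S.xs_pos
  have hb2 : 0 < S.b (S.xs / 2) := S.b_pos' (by linarith)
  have hd2 : 0 < S.d (S.xs / 2) := S.d_pos' (by linarith)
  set c : ℝ := Real.sqrt (S.b (S.xs / 2) * S.d (S.xs / 2)) with hcdef
  have hc0 : 0 < c := Real.sqrt_pos.mpr (mul_pos hb2 hd2)
  refine ⟨5 * C / c, div_pos (by linarith) hc0, ?_⟩
  have hlog : ∀ᶠ K : ℕ in atTop, Real.log K ≤ S.xs / 4 * (K : ℝ) ^ ((1 : ℝ) / 3) := by
    have hb := (isLittleO_log_rpow_atTop (by norm_num : (0:ℝ) < 1/3)).def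
      (by positivity : (0:ℝ) < S.xs / 4)
    filter_upwards [tendsto_natCast_atTop_atTop.eventually hb] with K hK
    have hK0 : (0 : ℝ) ≤ (K : ℝ) := Nat.cast_nonneg K
    calc Real.log K ≤ |Real.log K| := le_abs_self _
      _ ≤ S.xs / 4 * |(K : ℝ) ^ ((1:ℝ)/3)| := by simpa [Real.norm_eq_abs] using hK
      _ = S.xs / 4 * (K : ℝ) ^ ((1:ℝ)/3) := by
          rw [abs_of_nonneg (Real.rpow_nonneg hK0 _)]
  have hbig : ∀ᶠ K : ℕ in atTop, (4:ℝ) ≤ (K : ℝ) * S.xs := by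
    have hT : Tendsto (fun K : ℕ => (K : ℝ) * S.xs) atTop atTop :=
      tendsto_natCast_atTop_atTop.atTop_mul_const hxs0
    exact hT.eventually_ge_atTop 4
  obtain ⟨K₀, hK₀⟩ :=
    Filter.eventually_atTop.mp ((hlog.and hbig).and (Filter.eventually_ge_atTop 1))
  refine ⟨K₀, ?_⟩
  intro K hKK h hh
  obtain ⟨⟨hlogK, hbigK⟩, hK1⟩ := hK₀ K hKK
  have hK1' : (1:ℝ) ≤ (K:ℝ) := by exact_mod_cast hK1
  have hK0R : (0:ℝ) < (K:ℝ) := by linarith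
  have hck : (0:ℝ) < c * K := mul_pos hc0 hK0R
  set r : ℝ := Real.sqrt K with hrdef
  have hr0 : 0 < r := Real.sqrt_pos.mpr hK0R
  have hrr : r * r = (K:ℝ) := Real.mul_self_sqrt hK0R.le
  have hr1 : 1 ≤ r := by nlinarith
  set A : ℤ → ℝ := Aseq (φ K) with hAdef
  set β : ℝ := S.xs * K + 1/2 with hβdef
  set t : ℝ := r * h with htdef
  -- lower bound on n_r(K)
  have hnr : (K:ℝ) * S.xs / 2 ≤ ((S.nr K : ℤ) : ℝ) := by
    have h1 : (K:ℝ) ^ ((2:ℝ)/3) * Real.log K ≤ (K:ℝ) * S.xs / 4 := by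
      have e23 : (2:ℝ)/3 + (1:ℝ)/3 = 1 := by norm_num
      calc (K:ℝ)^((2:ℝ)/3) * Real.log K
          ≤ (K:ℝ)^((2:ℝ)/3) * (S.xs/4 * (K:ℝ)^((1:ℝ)/3)) :=
            mul_le_mul_of_nonneg_left hlogK (Real.rpow_nonneg hK0R.le _)
        _ = S.xs/4 * ((K:ℝ)^((2:ℝ)/3) * (K:ℝ)^((1:ℝ)/3)) := by ring
        _ = S.xs/4 * (K:ℝ)^((2:ℝ)/3 + (1:ℝ)/3) := by rw [← Real.rpow_add hK0R]
        _ = (K:ℝ) * S.xs / 4 := by rw [e23, Real.rpow_one]; ring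
    have hnrdef : S.nr K = ⌊(K:ℝ) * S.xs - (K:ℝ) ^ ((2:ℝ)/3) * Real.log K⌋ := rfl
    have h2 : (K:ℝ) * S.xs - (K:ℝ)^((2:ℝ)/3) * Real.log K - 1 < ((S.nr K : ℤ) : ℝ) := by
      rw [hnrdef]
      exact Int.sub_one_lt_floor _
    linarith
  have hnr1 : 1 ≤ S.nr K := by
    have hn' : (1:ℝ) ≤ ((S.nr K : ℤ) : ℝ) := by nlinarith [hbigK, hnr]
    exact_mod_cast hn'
  have hAzero : ∀ m : ℤ, m ≤ S.nr K → A m = 0 := by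
    intro m hm
    rw [hAdef]
    simp only [Aseq]
    split_ifs with h1
    · refine hvanish K hK1 m.toNat ?_
      rwa [Int.toNat_of_nonneg (by omega)]
    · rfl
  -- termwise weight bound
  have hw : ∀ n : ℕ, (φ K (n+2) - φ K (n+1))^2
      ≤ 1 / (c * K) * (Real.sqrt (S.lam K (n+1) * S.mu K (n+2)) * (φ K (n+2) - φ K (n+1))^2) := by
    intro n
    by_cases hz : φ K (n+2) = φ K (n+1)
    · rw [hz]
      simp
    · have hge : S.nr K ≤ (n:ℤ) + 1 := by
        by_contra hlt
        push_neg at hlt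
        exact hz (by rw [hvanish K hK1 (n+2) (by omega), hvanish K hK1 (n+1) (by omega)])
      have hx1 : S.xs / 2 ≤ ((n+1 : ℕ) : ℝ) / K := by
        have hcast : ((S.nr K : ℤ) : ℝ) ≤ (n:ℝ) + 1 := by exact_mod_cast hge
        rw [le_div_iff₀ hK0R]
        push_cast
        linarith
      have hx2 : S.xs / 2 ≤ ((n+2 : ℕ) : ℝ) / K := by
        have hcast : ((S.nr K : ℤ) : ℝ) ≤ (n:ℝ) + 1 := by exact_mod_cast hge
        rw [le_div_iff₀ hK0R]
        push_cast
        linarith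
      have hb' : S.b (S.xs/2) ≤ S.b (((n+1:ℕ):ℝ) / K) := S.b_mono' (by linarith) hx1
      have hd' : S.d (S.xs/2) ≤ S.d (((n+2:ℕ):ℝ) / K) := S.d_mono' (by linarith) hx2
      have hlamge : c * K ≤ Real.sqrt (S.lam K (n+1) * S.mu K (n+2)) := by
        have hck2 : c * K = Real.sqrt (S.b (S.xs/2) * S.d (S.xs/2) * ((K:ℝ) * K)) := by
          rw [Real.sqrt_mul (mul_nonneg hb2.le hd2.le) ((K:ℝ)*(K:ℝ)),
            Real.sqrt_mul_self hK0R.le, hcdef]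
        rw [hck2]
        apply Real.sqrt_le_sqrt
        have hlam : S.lam K (n+1) = (K:ℝ) * S.b (((n+1:ℕ):ℝ)/K) := rfl
        have hmu : S.mu K (n+2) = (K:ℝ) * S.d (((n+2:ℕ):ℝ)/K) := rfl
        rw [hlam, hmu]
        have hprod : S.b (S.xs/2) * S.d (S.xs/2)
            ≤ S.b (((n+1:ℕ):ℝ)/K) * S.d (((n+2:ℕ):ℝ)/K) :=
          mul_le_mul hb' hd' hd2.le (hb2.le.trans hb')
        nlinarith [hprod, hK0R]
      calc (φ K (n+2) - φ K (n+1))^2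
          = 1/(c*K) * ((c*K) * (φ K (n+2) - φ K (n+1))^2) := by
            field_simp
        _ ≤ 1/(c*K) * (Real.sqrt (S.lam K (n+1) * S.mu K (n+2)) * (φ K (n+2) - φ K (n+1))^2) := by
            refine mul_le_mul_of_nonneg_left ?_ (by positivity)
            exact mul_le_mul_of_nonneg_right hlamge (sq_nonneg _)
  have hT1 : (∑' n : ℕ, Real.sqrt (S.lam K (n+1) * S.mu K (n+2))
      * (φ K (n+2) - φ K (n+1))^2) ≤ C := by
    have h2 := hbound K hK1
    have hT2 : 0 ≤ ∑' n : ℕ, max 1 (S.Vpot K (n+1)) * (φ K (n+1))^2 :=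
      tsum_nonneg fun n => mul_nonneg (le_trans zero_le_one (le_max_left _ _)) (sq_nonneg _)
    linarith
  have hAn : ∀ n : ℕ, A ((n:ℤ) + 1) = φ K (n+1) := by
    intro n
    rw [hAdef]
    simp only [Aseq]
    have e : ((n:ℤ)+1).toNat = n+1 := by omega
    rw [if_pos (by omega), e]
  have hDle : (∑' m : ℤ, ENNReal.ofReal ((A (m+1) - A m)^2)) ≤ ENNReal.ofReal (C / (c * K)) := by
    have hinj : Function.Injective (fun n : ℕ => (n:ℤ) + 1) := by
      intro a b hab
      simpa using hab
    have hsupp : Function.support (fun m : ℤ => ENNReal.ofReal ((A (m+1) - A m)^2))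
        ⊆ Set.range (fun n : ℕ => (n:ℤ) + 1) := by
      intro m hm
      rcases le_or_gt m 0 with hm0 | hm0
      · exfalso
        apply hm
        show ENNReal.ofReal ((A (m+1) - A m)^2) = 0
        rw [hAzero (m+1) (by omega), hAzero m (by omega)]
        simp
      · exact ⟨(m-1).toNat, by show ((m-1).toNat : ℤ) + 1 = m; omega⟩
    have hre : ∑' n : ℕ, ENNReal.ofReal ((A (((n:ℤ)+1) + 1) - A ((n:ℤ)+1))^2)
        = ∑' m : ℤ, ENNReal.ofReal ((A (m+1) - A m)^2) :=
      Function.Injective.tsum_eq hinj hsupp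
    rw [← hre]
    calc ∑' n : ℕ, ENNReal.ofReal ((A (((n:ℤ) + 1) + 1) - A ((n:ℤ)+1))^2)
        = ∑' n : ℕ, ENNReal.ofReal ((φ K (n+2) - φ K (n+1))^2) := by
          refine tsum_congr fun n => ?_
          have e1 : ((n:ℤ) + 1 + 1) = (((n+1:ℕ)):ℤ) + 1 := by push_cast; ring
          rw [e1, hAn (n+1), hAn n]
      _ ≤ ∑' n : ℕ, ENNReal.ofReal (1/(c*K) * (Real.sqrt (S.lam K (n+1) * S.mu K (n+2))
            * (φ K (n+2) - φ K (n+1))^2)) :=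
          ENNReal.tsum_le_tsum fun n => ENNReal.ofReal_le_ofReal (hw n)
      _ = ENNReal.ofReal (∑' n : ℕ, 1/(c*K) * (Real.sqrt (S.lam K (n+1) * S.mu K (n+2))
            * (φ K (n+2) - φ K (n+1))^2)) :=
          (ENNReal.ofReal_tsum_of_nonneg (fun n => mul_nonneg (one_div_nonneg.mpr hck.le)
            (mul_nonneg (Real.sqrt_nonneg _) (sq_nonneg _))) ((hsum1 K hK1).mul_left _)).symm
      _ ≤ ENNReal.ofReal (C / (c*K)) := by
          apply ENNReal.ofReal_le_ofReal
          rw [tsum_mul_left]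
          calc 1/(c*K) * ∑' n : ℕ, (Real.sqrt (S.lam K (n+1) * S.mu K (n+2))
              * (φ K (n+2) - φ K (n+1))^2)
              ≤ 1/(c*K) * C := mul_le_mul_of_nonneg_left hT1 (by positivity)
            _ = C / (c*K) := by ring
  -- measurability and main lintegral bound
  set g : ℝ → ℝ≥0∞ := fun y => ENNReal.ofReal ((A ⌊y + t⌋ - A ⌊y⌋)^2) with hgdef
  have hAmeas : Measurable A := measurable_from_top
  have hgmeas : Measurable g := by
    apply Measurable.ennreal_ofReal
    exact ((hAmeas.comp (Int.measurable_floor.comp (measurable_id.add_const t))).sub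
      (hAmeas.comp Int.measurable_floor)).pow_const 2
  have hmain : ∫⁻ y, g y ≤ ENNReal.ofReal (|t| + 4*t^2)
      * ∑' m : ℤ, ENNReal.ofReal ((A (m+1) - A m)^2) := by
    rcases le_or_gt 0 t with ht0 | ht0
    · rw [abs_of_nonneg ht0]
      simp only [hgdef]
      exact floor_diff_lintegral A ht0
    · have hmp := (measurePreserving_add_right (volume : Measure ℝ) (-t)).lintegral_comp hgmeas
      have hswap : ∫⁻ y, g y = ∫⁻ x, ENNReal.ofReal ((A ⌊x + (-t)⌋ - A ⌊x⌋)^2) := by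
        rw [← hmp]
        refine lintegral_congr fun x => ?_
        simp only [hgdef]
        have e1 : x + -t + t = x := by ring
        rw [e1]
        congr 1
        ring
      rw [hswap]
      have hbnd := floor_diff_lintegral A (t := -t) (by linarith)
      have heq : |t| + 4*t^2 = -t + 4*(-t)^2 := by rw [abs_of_neg ht0]; ring
      rw [heq]
      exact hbnd
  -- rewrite the integrand
  have hQ : ∀ x : ℝ, QKr S.xs K (φ K) x = (K:ℝ)^((1:ℝ)/4) * A ⌊r * x + β⌋ := by
    intro x
    rw [QKr_eq S.xs hK1 (φ K) x,
      (by ring : Real.sqrt (K:ℝ) * x + S.xs * (K:ℝ) + 1/2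
        = Real.sqrt (K:ℝ) * x + (S.xs * (K:ℝ) + 1/2)),
      ← hrdef, ← hβdef, ← hAdef]
  have hint : (fun x : ℝ => (QKr S.xs K (φ K) (x + h) - QKr S.xs K (φ K) x)^2)
      = fun x : ℝ => r * (A ⌊r * x + β + t⌋ - A ⌊r * x + β⌋)^2 := by
    funext x
    rw [hQ (x + h), hQ x]
    have e1 : r * (x + h) + β = r * x + β + t := by rw [htdef]; ring
    rw [e1, ← mul_sub, mul_pow]
    have e2 : ((K:ℝ)^((1:ℝ)/4))^2 = r := by
      rw [hrdef, Real.sqrt_eq_rpow, ← Real.rpow_natCast ((K:ℝ)^((1:ℝ)/4)) 2,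
        ← Real.rpow_mul hK0R.le]
      norm_num
    rw [e2]
  rw [hint]
  have haff : Measurable fun x : ℝ => r * x + β := (measurable_id.const_mul r).add_const β
  have hGmeas : Measurable fun x : ℝ => r * (A ⌊r * x + β + t⌋ - A ⌊r * x + β⌋)^2 := by
    apply Measurable.const_mul
    exact ((hAmeas.comp (Int.measurable_floor.comp (haff.add_const t))).sub
      (hAmeas.comp (Int.measurable_floor.comp haff))).pow_const 2
  rw [MeasureTheory.integral_eq_lintegral_of_nonneg_ae
    (ae_of_all _ fun x => mul_nonneg hr0.le (sq_nonneg _)) hGmeas.aestronglyMeasurable]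
  apply ENNReal.toReal_le_of_le_ofReal
    (mul_nonneg (div_nonneg (by linarith) hc0.le) (abs_nonneg h))
  have hfin : (|t| + 4*t^2) * (C / (c*(K:ℝ))) ≤ 5 * C / c * |h| := by
    have habs : |t| = r * |h| := by rw [htdef, abs_mul, abs_of_pos hr0]
    have h1 : |t| ≤ (K:ℝ) * |h| := by
      rw [habs]
      refine mul_le_mul_of_nonneg_right ?_ (abs_nonneg h)
      nlinarith
    have h2 : t^2 ≤ (K:ℝ) * |h| := by
      have e : t^2 = (r*r) * h^2 := by rw [htdef]; ring
      have habs2 : h^2 ≤ |h| := by nlinarith [sq_abs h, abs_nonneg h, hh]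
      rw [e, hrr]
      nlinarith [hK0R]
    have h3 : |t| + 4*t^2 ≤ 5*(K:ℝ)*|h| := by linarith
    have h4 : (0:ℝ) ≤ C / (c*(K:ℝ)) := div_nonneg hC.le hck.le
    calc (|t| + 4*t^2) * (C / (c*(K:ℝ))) ≤ (5*(K:ℝ)*|h|) * (C / (c*(K:ℝ))) :=
        mul_le_mul_of_nonneg_right h3 h4
      _ = 5 * C / c * |h| := by field_simp
  calc ∫⁻ x, ENNReal.ofReal (r * (A ⌊r * x + β + t⌋ - A ⌊r * x + β⌋)^2)
      = ∫⁻ x, ENNReal.ofReal r * g (r * x + β) := by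
        refine lintegral_congr fun x => ?_
        rw [ENNReal.ofReal_mul hr0.le]
    _ = ENNReal.ofReal r * ∫⁻ x, g (r * x + β) := lintegral_const_mul _ (hgmeas.comp haff)
    _ = ENNReal.ofReal r * (ENNReal.ofReal r⁻¹ * ∫⁻ y, g y) := by
        rw [lintegral_affine hgmeas hr0 β]
    _ = ∫⁻ y, g y := by
        rw [← mul_assoc, ← ENNReal.ofReal_mul hr0.le, mul_inv_cancel₀ hr0.ne',
          ENNReal.ofReal_one, one_mul]
    _ ≤ ENNReal.ofReal (|t| + 4*t^2) * ∑' m : ℤ, ENNReal.ofReal ((A (m+1) - A m)^2) := hmain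
    _ ≤ ENNReal.ofReal (|t| + 4*t^2) * ENNReal.ofReal (C / (c*(K:ℝ))) := mul_le_mul_right hDle _
    _ = ENNReal.ofReal ((|t| + 4*t^2) * (C / (c*(K:ℝ)))) := (ENNReal.ofReal_mul (by positivity)).symm
    _ ≤ ENNReal.ofReal (5 * C / c * |h|) := ENNReal.ofReal_le_ofReal hfin
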